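/- If P ∈ V1 ⊗ ... ⊗ Vn is a persistent tensor of minimal possible rank rk(P) = Σ_{k=1}^{n-1}(dim V_k - 1) + 1, then rk(G(d,n) ⊠ P) = rk(G(d,n) ⊗ P) = d · rk(P), where G(d,n) = Σ_{j=0}^{d-1} |j⟩^⊗n is the n-qudit GHZ tensor and ⊠ denotes the Kronecker product. -/

import Mathlib

open scoped BigOperators

/-- Contraction of a tensor by a covector (given in coordinates) in the first factor. -/
noncomputable def contrFirst {n : ℕ} {d : Fin (n + 1) → ℕ} (f : Fin (d 0) → ℂ)
    (T : ((i : Fin (n + 1)) → Fin (d i)) → ℂ) :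
    ((i : Fin n) → Fin (d i.succ)) → ℂ :=
  fun y => ∑ j : Fin (d 0), f j * T (Fin.cons j y)

/-- `T` is 1-concise: it lies in `V₁' ⊗ V₂ ⊗ ⋯ ⊗ Vₙ` only for `V₁' = V₁`.
In coordinates, `T` lies in `V₁' ⊗ (rest)` iff all its first-factor coordinate
slices (as vectors of `V₁`) lie in `V₁'`. -/
noncomputable def Concise1 {n : ℕ} {d : Fin (n + 1) → ℕ}
    (T : ((i : Fin (n + 1)) → Fin (d i)) → ℂ) : Prop :=
  ∀ V' : Submodule ℂ (Fin (d 0) → ℂ),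
    (∀ y : (i : Fin n) → Fin (d i.succ), (fun j => T (Fin.cons j y)) ∈ V') → V' = ⊤

/-- Persistent tensors, defined inductively on the number of factors (`n + 2` factors). -/
noncomputable def Persistent : (n : ℕ) → (d : Fin (n + 2) → ℕ) →
    (((i : Fin (n + 2)) → Fin (d i)) → ℂ) → Prop
  | 0, _, T => Concise1 T
  | n + 1, d, T => Concise1 T ∧ ∃ S : Submodule ℂ (Fin (d 0) → ℂ), S ≠ ⊤ ∧
      ∀ f : Fin (d 0) → ℂ, f ∉ S → Persistent n (fun i => d i.succ) (contrFirst f T)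

/-- Tensor rank: minimal number of simple tensors summing to `T`. -/
noncomputable def tensorRank {ι : Type} [Fintype ι] {κ : ι → Type}
    (T : ((i : ι) → κ i) → ℂ) : ℕ :=
  sInf {r | ∃ v : Fin r → (i : ι) → κ i → ℂ, ∀ x, T x = ∑ p, ∏ i, v p i (x i)}

/-- Border rank: smallest `r` such that `T` is a limit of tensors of rank at most `r`. -/
noncomputable def borderRank {ι : Type} [Fintype ι] {κ : ι → Type}
    (T : ((i : ι) → κ i) → ℂ) : ℕ :=
  sInf {r | ∃ seq : ℕ → (((i : ι) → κ i) → ℂ),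
    (∀ k, tensorRank (seq k) ≤ r) ∧ Filter.Tendsto seq Filter.atTop (nhds T)}

/-- Direct sum of tensors, in coordinates. -/
noncomputable def dsum {n : ℕ} {a b : Fin n → ℕ}
    (T : ((i : Fin n) → Fin (a i)) → ℂ) (P : ((i : Fin n) → Fin (b i)) → ℂ) :
    ((i : Fin n) → Fin (a i + b i)) → ℂ :=
  fun x =>
    if h : ∀ i, (x i).val < a i then T (fun i => ⟨(x i).val, h i⟩)
    else if h' : ∀ i, a i ≤ (x i).val then
      P (fun i => ⟨(x i).val - a i, by have := (x i).isLt; have := h' i; omega⟩)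
    else 0

/-- Kronecker product of tensors (grouping corresponding factors). -/
noncomputable def kron {ι : Type} (κ₁ κ₂ : ι → Type)
    (A : ((i : ι) → κ₁ i) → ℂ) (B : ((i : ι) → κ₂ i) → ℂ) :
    ((i : ι) → κ₁ i × κ₂ i) → ℂ :=
  fun x => A (fun i => (x i).1) * B (fun i => (x i).2)

/-- Tensor product of tensors (as a tensor with all factors of both). -/
noncomputable def tprodT {ι ι' : Type} (κ₁ : ι → Type) (κ₂ : ι' → Type)
    (A : ((i : ι) → κ₁ i) → ℂ) (B : ((i : ι') → κ₂ i) → ℂ) :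
    ((i : ι ⊕ ι') → Sum.elim κ₁ κ₂ i) → ℂ :=
  fun x => A (fun i => x (.inl i)) * B (fun i => x (.inr i))

/-- The n-qudit GHZ tensor `∑ⱼ |j⟩^⊗n`. -/
noncomputable def GHZ (D n : ℕ) : ((Fin n) → Fin D) → ℂ :=
  fun x => if ∃ j : Fin D, ∀ i, x i = j then 1 else 0

/-- The n-qubit W state: sum of basis vectors with exactly one coordinate equal to 1. -/
noncomputable def Wfun (n : ℕ) : ((Fin n) → Fin 2) → ℂ :=
  fun x => if (Finset.univ.filter fun i => x i = 1).card = 1 then 1 else 0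

/-- The n-qudit L state `∑_{j₁+⋯+jₙ = d-1} |j₁⋯jₙ⟩`. -/
noncomputable def Lfun (D n : ℕ) : ((Fin n) → Fin D) → ℂ :=
  fun x => if ∑ i, (x i).val = D - 1 then 1 else 0

/-- Primitive r-th root of unity `exp(2πi/r)`. -/
noncomputable def zeta (r : ℕ) : ℂ := Complex.exp (2 * Real.pi * Complex.I / r)

section AuxRank
open Finset


lemma tensorRank_le {ι : Type} [Fintype ι] {κ : ι → Type}
    (T : ((i : ι) → κ i) → ℂ) {r : ℕ} (v : Fin r → (i : ι) → κ i → ℂ)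
    (h : ∀ x, T x = ∑ p, ∏ i, v p i (x i)) : tensorRank T ≤ r :=
  Nat.sInf_le ⟨v, h⟩

lemma tensorRank_set_nonempty {ι : Type} [Fintype ι] [Nonempty ι] {κ : ι → Type}
    [∀ i, Fintype (κ i)] (T : ((i : ι) → κ i) → ℂ) :
    {r | ∃ v : Fin r → (i : ι) → κ i → ℂ, ∀ x, T x = ∑ p, ∏ i, v p i (x i)}.Nonempty := by
  classical
  obtain ⟨i₀⟩ := ‹Nonempty ι›
  let e : Fin (Fintype.card ((i : ι) → κ i)) ≃ ((i : ι) → κ i) :=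
    (Fintype.equivFin ((i : ι) → κ i)).symm
  refine ⟨Fintype.card ((i : ι) → κ i), fun p i k => if k = e p i then (if i = i₀ then T (e p) else 1) else 0,
    fun x => ?_⟩
  have key : ∀ p, (∏ i, if x i = e p i then (if i = i₀ then T (e p) else 1) else 0)
      = if e p = x then T (e p) else 0 := by
    intro p
    by_cases hx : e p = x
    · subst hx
      simp [Finset.prod_ite_eq']
    · rw [if_neg hx]
      have : ∃ i, x i ≠ e p i := by
        by_contra hc
        push_neg at hc
        exact hx (funext fun i => (hc i).symm)
      obtain ⟨i, hi⟩ := this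
      exact Finset.prod_eq_zero (Finset.mem_univ i) (by rw [if_neg hi])
  simp only [key]
  rw [Fintype.sum_equiv e (fun p => if e p = x then T (e p) else 0)
      (fun y => if y = x then T y else 0) (fun p => by simp)]
  simp

lemma tensorRank_mem {ι : Type} [Fintype ι] [Nonempty ι] {κ : ι → Type}
    [∀ i, Fintype (κ i)] (T : ((i : ι) → κ i) → ℂ) :
    ∃ v : Fin (tensorRank T) → (i : ι) → κ i → ℂ, ∀ x, T x = ∑ p, ∏ i, v p i (x i) :=
  Nat.sInf_mem (tensorRank_set_nonempty T)

lemma tensorRank_le_card {ι : Type} [Fintype ι] {κ : ι → Type}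
    (T : ((i : ι) → κ i) → ℂ) {r : ℕ} (v : Fin r → (i : ι) → κ i → ℂ)
    (σ : Finset (Fin r)) (h : ∀ x, T x = ∑ p ∈ σ, ∏ i, v p i (x i)) :
    tensorRank T ≤ σ.card := by
  classical
  let e : Fin σ.card ≃ σ := (Fintype.equivFinOfCardEq (Fintype.card_coe σ)).symm
  refine tensorRank_le T (fun q => v (e q)) (fun x => ?_)
  rw [h x, ← Finset.sum_attach σ (fun p => ∏ i, v p i (x i))]
  exact (Equiv.sum_comp e (fun s => ∏ i, v s.1 i (x i))).symm

-- block diagonal tensor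
noncomputable def bd {m : ℕ} {b : Fin m → ℕ} {D : ℕ}
    (P : Fin D → (((i : Fin m) → Fin (b i)) → ℂ)) :
    ((i : Fin m) → Fin D × Fin (b i)) → ℂ :=
  fun x => ∑ j, (if ∀ i, (x i).1 = j then 1 else 0) * P j (fun i => (x i).2)

-- slices lie in the span of the first-factor vectors of a decomposition
lemma slice_mem_span {n r : ℕ} {κ' : Fin (n+1) → Type}
    (T : ((i : Fin (n+1)) → κ' i) → ℂ) (v : Fin r → (i : Fin (n+1)) → κ' i → ℂ)
    (hv : ∀ x, T x = ∑ p, ∏ i, v p i (x i)) (y : (i : Fin n) → κ' i.succ) :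
    (fun c => T (Fin.cons c y)) ∈ Submodule.span ℂ (Set.range fun p => v p 0) := by
  have : (fun c => T (Fin.cons c y))
      = ∑ p, (∏ i : Fin n, v p i.succ (y i)) • (v p 0) := by
    funext c
    rw [hv (Fin.cons c y), Finset.sum_apply]
    congr 1; funext p
    rw [Fin.prod_univ_succ]
    simp [mul_comm]
  rw [this]
  exact Submodule.sum_mem _ fun p _ =>
    Submodule.smul_mem _ _ (Submodule.subset_span ⟨p, rfl⟩)

-- the block embedding, as a linear map
noncomputable def embBlock (D m : ℕ) (j : Fin D) : (Fin m → ℂ) →ₗ[ℂ] (Fin D × Fin m → ℂ) where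
  toFun w := fun c => (if c.1 = j then 1 else 0) * w c.2
  map_add' w₁ w₂ := by funext c; by_cases h : c.1 = j <;> simp [h, mul_add]
  map_smul' a w := by funext c; by_cases h : c.1 = j <;> simp [h, mul_comm, mul_left_comm]

lemma bd_concise {n : ℕ} {b : Fin (n+2) → ℕ} {D : ℕ}
    (P : Fin D → (((i : Fin (n+2)) → Fin (b i)) → ℂ)) (hC : ∀ j, Concise1 (P j))
    (V' : Submodule ℂ (Fin D × Fin (b 0) → ℂ))
    (hV : ∀ y : (i : Fin (n+1)) → Fin D × Fin (b i.succ),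
      (fun c => bd P (Fin.cons c y)) ∈ V') : V' = ⊤ := by
  classical
  have hblock : ∀ j : Fin D, ∀ w : Fin (b 0) → ℂ, embBlock D (b 0) j w ∈ V' := by
    intro j
    have := hC j (Submodule.comap (embBlock D (b 0) j) V') ?_
    · intro w
      have hw : w ∈ (⊤ : Submodule ℂ (Fin (b 0) → ℂ)) := Submodule.mem_top
      rw [← this] at hw
      exact hw
    · intro y₂
      have key : (embBlock D (b 0) j fun a => P j (Fin.cons a y₂))
          = fun c => bd P (Fin.cons c (fun i => (j, y₂ i))) := by
        funext c
        obtain ⟨j', a⟩ := c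
        simp only [embBlock, LinearMap.coe_mk, AddHom.coe_mk, bd]
        have hsnd : (fun i => ((Fin.cons (⟨j', a⟩ : Fin D × Fin (b 0))
            (fun i => (j, y₂ i)) : (i : Fin (n+2)) → Fin D × Fin (b i)) i).2)
            = Fin.cons a y₂ := by
          funext i
          refine Fin.cases ?_ (fun i => ?_) i <;> simp
        rw [Finset.sum_eq_single j]
        · have hcond : (∀ i, ((Fin.cons (⟨j', a⟩ : Fin D × Fin (b 0))
              (fun i => (j, y₂ i)) : (i : Fin (n+2)) → Fin D × Fin (b i)) i).1 = j) ↔ j' = j := by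
            constructor
            · intro h; simpa using h 0
            · intro h i
              refine Fin.cases ?_ (fun i => ?_) i <;> simp [h]
          rw [hsnd]
          by_cases h : j' = j
          · rw [if_pos h, if_pos (hcond.mpr h)]
          · rw [if_neg h, if_neg (fun hc => h (hcond.mp hc))]
        · intro j'' _ hj''
          have : ¬ (∀ i, ((Fin.cons (⟨j', a⟩ : Fin D × Fin (b 0))
              (fun i => (j, y₂ i)) : (i : Fin (n+2)) → Fin D × Fin (b i)) i).1 = j'') := by
            intro h
            have h1 := h (Fin.succ 0)
            rw [Fin.cons_succ] at h1
            exact hj'' h1.symm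
          rw [if_neg this, zero_mul]
        · intro h; exact absurd (Finset.mem_univ j) h
      show (fun a => P j (Fin.cons a y₂)) ∈ Submodule.comap (embBlock D (b 0) j) V'
      rw [Submodule.mem_comap, key]
      exact hV _
  rw [Submodule.eq_top_iff']
  intro u
  have : u = ∑ j : Fin D, embBlock D (b 0) j (fun a => u (j, a)) := by
    funext c
    obtain ⟨j', a⟩ := c
    rw [Finset.sum_apply]
    simp only [embBlock, LinearMap.coe_mk, AddHom.coe_mk]
    rw [Finset.sum_eq_single j']
    · simp
    · intro j'' _ h; simp [Ne.symm h]
    · intro h; exact absurd (Finset.mem_univ j') h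
  rw [this]
  exact Submodule.sum_mem _ fun j _ => hblock j _

lemma pair_single {N : Type} [Fintype N] [DecidableEq N] (φ : (N → ℂ) →ₗ[ℂ] ℂ) (u : N → ℂ) :
    ∑ c, φ (Pi.single c 1) * u c = φ u := by
  have hu : u = ∑ c, u c • (Pi.single c 1 : N → ℂ) := by
    funext d
    rw [Finset.sum_apply]
    simp [Pi.single_apply]
  conv_rhs => rw [hu]
  rw [map_sum]
  simp [mul_comm]

lemma bd_rank_lower (D : ℕ) : ∀ (n : ℕ) (b : Fin (n+2) → ℕ)
    (P : Fin D → (((i : Fin (n+2)) → Fin (b i)) → ℂ)),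
    (∀ j, Persistent n b (P j)) → (∀ i, 1 ≤ b i) →
    D * ((∑ k : Fin (n+1), (b k.castSucc - 1)) + 1) ≤ tensorRank (bd P) := by
  intro n
  induction n with
  | zero =>
    intro b P hP hb
    obtain ⟨v, hv⟩ := tensorRank_mem (bd P)
    have hspan : Submodule.span ℂ (Set.range fun p => v p 0) = ⊤ :=
      bd_concise P (fun j => hP j) _ (fun y => slice_mem_span _ v hv y)
    have hfr : Module.finrank ℂ (Fin D × Fin (b 0) → ℂ) ≤ tensorRank (bd P) := by
      simpa using finrank_le_of_span_eq_top hspan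
    rw [Module.finrank_fintype_fun_eq_card, Fintype.card_prod, Fintype.card_fin,
      Fintype.card_fin] at hfr
    refine le_trans (le_of_eq ?_) hfr
    have hb0 := hb 0
    rw [Fin.sum_univ_one]
    have : (0 : Fin 1).castSucc = 0 := rfl
    rw [this, Nat.sub_add_cancel hb0]

  | succ n IH =>
    intro b P hP hb
    classical
    -- unfold persistence
    have hPc : ∀ j, Concise1 (P j) := fun j => (hP j).1
    have hPS : ∀ j, ∃ S : Submodule ℂ (Fin (b 0) → ℂ), S ≠ ⊤ ∧
        ∀ f : Fin (b 0) → ℂ, f ∉ S →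
          Persistent n (fun i => b i.succ) (contrFirst f (P j)) := fun j => (hP j).2
    choose S hSne hSpers using hPS
    -- minimal decomposition of the block diagonal tensor
    obtain ⟨v, hv⟩ := tensorRank_mem (bd P)
    have hspan : Submodule.span ℂ (Set.range fun p => v p 0) = ⊤ :=
      bd_concise P hPc _ (fun y => slice_mem_span _ v hv y)
    -- extract a basis from the spanning set
    obtain ⟨t, hts, htsp, htli⟩ :=
      exists_linearIndependent ℂ (Set.range fun p => v p 0)
    let B : Module.Basis t ℂ (Fin D × Fin (b 0) → ℂ) :=
      Module.Basis.mk htli (by rw [Subtype.range_coe, htsp, hspan])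
    have hBw : ∀ w'' : t, B w'' = (w'' : Fin D × Fin (b 0) → ℂ) :=
      fun w'' => Module.Basis.mk_apply htli _ w''
    haveI : Fintype t := FiniteDimensional.fintypeBasisIndex B
    have hcardt : Fintype.card t = D * b 0 := by
      rw [← Module.finrank_eq_card_basis B, Module.finrank_fintype_fun_eq_card,
        Fintype.card_prod, Fintype.card_fin, Fintype.card_fin]
    have hpickex : ∀ w : t, ∃ p : Fin (tensorRank (bd P)), v p 0 = (w : Fin D × Fin (b 0) → ℂ) :=
      fun w => hts w.2
    choose pick hpick using hpickex
    have hpickinj : Function.Injective pick := by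
      intro w1 w2 h
      apply Subtype.ext
      rw [← hpick w1, ← hpick w2, h]
    -- for each block, some basis coordinate functional restricts outside S j
    have hwj : ∀ j : Fin D, ∃ w : t,
        (fun a => B.coord w (Pi.single (j, a) 1)) ∉ S j := by
      intro j
      by_contra hcon
      push_neg at hcon
      apply hSne j
      rw [Submodule.eq_top_iff']
      intro g₀
      let φ : (Fin D × Fin (b 0) → ℂ) →ₗ[ℂ] ℂ :=
        { toFun := fun u => ∑ a, g₀ a * u (j, a)
          map_add' := fun u₁ u₂ => by simp [mul_add, Finset.sum_add_distrib]
          map_smul' := fun a u => by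
            simp [Finset.mul_sum, mul_comm, mul_left_comm] }
      have hg₀ : g₀ = ∑ w : t, φ (w : Fin D × Fin (b 0) → ℂ) •
          (fun a => B.coord w (Pi.single (j, a) 1)) := by
        funext a
        rw [Finset.sum_apply]
        have hexp : (Pi.single (j, a) 1 : Fin D × Fin (b 0) → ℂ)
            = ∑ w : t, B.coord w (Pi.single (j, a) 1) • (w : Fin D × Fin (b 0) → ℂ) := by
          conv_lhs => rw [← B.sum_repr (Pi.single (j, a) 1)]
          refine Finset.sum_congr rfl (fun w _ => ?_)
          rw [Module.Basis.coord_apply, hBw]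
        have : φ (Pi.single (j, a) 1)
            = ∑ w : t, B.coord w (Pi.single (j, a) 1) * φ (w : Fin D × Fin (b 0) → ℂ) := by
          conv_lhs => rw [hexp]
          rw [map_sum]
          simp
        have hφ : φ (Pi.single (j, a) 1) = g₀ a := by
          simp only [φ, LinearMap.coe_mk, AddHom.coe_mk]
          rw [Finset.sum_eq_single a]
          · rw [Pi.single_eq_same, mul_one]
          · intro a' _ ha'
            rw [Pi.single_apply, if_neg (by simp [ha']), mul_zero]
          · intro h; exact absurd (Finset.mem_univ a) h
        rw [← hφ, this]
        refine Finset.sum_congr rfl (fun w _ => ?_)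
        simp [mul_comm]
      rw [hg₀]
      exact Submodule.sum_mem _ fun w _ => Submodule.smul_mem _ _ (hcon w)
    choose w hw using hwj
    -- the linear map giving block restrictions of candidate covectors
    let L : Fin D → (Fin D → ℂ) →ₗ[ℂ] (Fin (b 0) → ℂ) := fun j =>
      { toFun := fun c => fun a => ∑ j', c j' * B.coord (w j') (Pi.single (j, a) 1)
        map_add' := fun c₁ c₂ => by
          funext a; simp [add_mul, Finset.sum_add_distrib]
        map_smul' := fun x c => by
          funext a; simp [Finset.mul_sum, mul_assoc] }
    have hBadne : ∀ j, (S j).comap (L j) ≠ ⊤ := by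
      intro j h
      apply hw j
      have : Pi.single j 1 ∈ (S j).comap (L j) := h ▸ Submodule.mem_top
      rw [Submodule.mem_comap] at this
      have hLj : L j (Pi.single j 1) = fun a => B.coord (w j) (Pi.single (j, a) 1) := by
        funext a
        simp only [L, LinearMap.coe_mk, AddHom.coe_mk]
        rw [Finset.sum_eq_single j]
        · rw [Pi.single_eq_same, one_mul]
        · intro j' _ hj'
          rw [Pi.single_apply, if_neg hj', zero_mul]
        · intro h'; exact absurd (Finset.mem_univ j) h'
      rwa [hLj] at this
    -- choose coefficients avoiding all the bad subspaces
    have hcex : ∃ c : Fin D → ℂ, ∀ j, c ∉ (S j).comap (L j) := by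
      by_contra hcon
      push_neg at hcon
      have hcover : ⋃ j : Fin D, ((S j).comap (L j) : Set (Fin D → ℂ)) = Set.univ := by
        rw [Set.eq_univ_iff_forall]
        intro c
        obtain ⟨j, hj⟩ := hcon c
        exact Set.mem_iUnion.mpr ⟨j, hj⟩
      obtain ⟨j, hj⟩ := Subspace.exists_eq_top_of_iUnion_eq_univ hcover
      exact hBadne j hj
    obtain ⟨c, hc⟩ := hcex
    let φ : (Fin D × Fin (b 0) → ℂ) →ₗ[ℂ] ℂ := ∑ j', c j' • B.coord (w j')
    let f : Fin D × Fin (b 0) → ℂ := fun cc => φ (Pi.single cc 1)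
    have hfL : ∀ j, (fun a => f (j, a)) = L j c := by
      intro j
      funext a
      simp only [f, φ, L, LinearMap.sum_apply, LinearMap.smul_apply, smul_eq_mul,
        LinearMap.coe_mk, AddHom.coe_mk]
    have hfS : ∀ j, (fun a => f (j, a)) ∉ S j := by
      intro j hmem
      exact hc j (by rwa [Submodule.mem_comap, ← hfL j])
    have hkill : ∀ w' : t, (∀ j', w' ≠ w j') → φ (w' : Fin D × Fin (b 0) → ℂ) = 0 := by
      intro w' hne
      simp only [φ, LinearMap.sum_apply, LinearMap.smul_apply, smul_eq_mul]
      refine Finset.sum_eq_zero (fun j' _ => ?_)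
      have : B.coord (w j') (w' : Fin D × Fin (b 0) → ℂ) = 0 := by
        rw [← hBw w', Module.Basis.coord_apply, Module.Basis.repr_self]
        exact Finsupp.single_eq_of_ne (hne j').symm
      rw [this, mul_zero]
    -- the contracted tensor
    let T' : ((i : Fin (n+2)) → Fin D × Fin (b i.succ)) → ℂ :=
      fun y => ∑ cc : Fin D × Fin (b 0), f cc * bd P (Fin.cons cc y)
    -- (I) T' is the block diagonal of the contracted blocks
    have hT' : T' = bd (fun j => contrFirst (fun a => f (j, a)) (P j)) := by
      funext y
      have hsnd : ∀ (j : Fin D) (a : Fin (b 0)),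
          (fun i => ((Fin.cons ((j, a) : Fin D × Fin (b 0)) y :
            (i : Fin (n+3)) → Fin D × Fin (b i)) i).2) = Fin.cons a (fun i => (y i).2) := by
        intro j a
        funext i
        refine Fin.cases ?_ (fun i => ?_) i <;> simp
      have hbdc : ∀ (j : Fin D) (a : Fin (b 0)),
          bd P (Fin.cons (j, a) y)
            = (if (∀ i : Fin (n+2), (y i).1 = j) then (1:ℂ) else 0)
              * P j (Fin.cons a (fun i => (y i).2)) := by
        intro j a
        simp only [bd]
        rw [Finset.sum_eq_single j]
        · rw [hsnd j a]
          have hiff : (∀ i : Fin (n+1+2), ((Fin.cons ((j, a) : Fin D × Fin (b 0)) y :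
              (i : Fin (n+1+2)) → Fin D × Fin (b i)) i).1 = j)
              ↔ (∀ i : Fin (n+2), (y i).1 = j) := by
            constructor
            · intro h i
              have := h i.succ
              rwa [Fin.cons_succ] at this
            · intro h i
              refine Fin.cases ?_ (fun i => ?_) i
              · rw [Fin.cons_zero]
              · rw [Fin.cons_succ]; exact h i
          congr 1
          exact if_congr hiff rfl rfl
        · intro j'' _ hj''
          have : ¬ (∀ i, ((Fin.cons ((j, a) : Fin D × Fin (b 0)) y :
              (i : Fin (n+3)) → Fin D × Fin (b i)) i).1 = j'') := by
            intro h
            have := h 0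
            rw [Fin.cons_zero] at this
            exact hj'' this.symm
          rw [if_neg this, zero_mul]
        · intro h; exact absurd (Finset.mem_univ j) h
      show ∑ cc : Fin D × Fin (b 0), f cc * bd P (Fin.cons cc y) = _
      rw [Fintype.sum_prod_type]
      simp only [hbdc]
      have hpull : ∀ j : Fin D,
          ∑ a, f (j, a) * ((if (∀ i : Fin (n+2), (y i).1 = j) then (1:ℂ) else 0)
              * P j (Fin.cons a (fun i => (y i).2)))
          = (if (∀ i : Fin (n+2), (y i).1 = j) then (1:ℂ) else 0)
              * ∑ a, f (j, a) * P j (Fin.cons a (fun i => (y i).2)) := by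
        intro j
        by_cases h : ∀ i : Fin (n+2), (y i).1 = j
        · simp only [if_pos h, one_mul, Finset.mul_sum]
        · simp [if_neg h]
      simp only [hpull]
      rfl
    -- (II) a small decomposition of T'
    have hT'decomp : ∀ y, T' y
        = ∑ p, φ (v p 0) * ∏ i : Fin (n+2), v p i.succ (y i) := by
      intro y
      show ∑ cc : Fin D × Fin (b 0), f cc * bd P (Fin.cons cc y) = _
      have hprodsplit : ∀ (p : Fin (tensorRank (bd P))) (cc : Fin D × Fin (b 0)),
          ∏ i : Fin (n+1+2), v p i ((Fin.cons cc y :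
              (i : Fin (n+1+2)) → Fin D × Fin (b i)) i)
            = v p 0 cc * ∏ i : Fin (n+2), v p i.succ (y i) := by
        intro p cc
        rw [Fin.prod_univ_succ]
        simp
      calc ∑ cc : Fin D × Fin (b 0), f cc * bd P (Fin.cons cc y)
          = ∑ cc : Fin D × Fin (b 0), ∑ p, f cc *
              (v p 0 cc * ∏ i : Fin (n+2), v p i.succ (y i)) := by
            refine Finset.sum_congr rfl fun cc _ => ?_
            rw [hv (Fin.cons cc y), Finset.mul_sum]
            exact Finset.sum_congr rfl fun p _ => by rw [hprodsplit]
        _ = ∑ p, (∑ cc : Fin D × Fin (b 0), f cc * v p 0 cc) *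
              ∏ i : Fin (n+2), v p i.succ (y i) := by
            rw [Finset.sum_comm]
            refine Finset.sum_congr rfl fun p _ => ?_
            rw [Finset.sum_mul]
            exact Finset.sum_congr rfl fun cc _ => by ring
        _ = ∑ p, φ (v p 0) * ∏ i : Fin (n+2), v p i.succ (y i) := by
            refine Finset.sum_congr rfl fun p _ => ?_
            rw [pair_single]
    -- assemble an explicit decomposition dropping the zero terms
    let u : Fin (tensorRank (bd P)) → (i : Fin (n+2)) → (Fin D × Fin (b i.succ)) → ℂ :=
      fun p i cc => if i = 0 then φ (v p 0) * v p i.succ cc else v p i.succ cc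
    have hprodu : ∀ (p : Fin (tensorRank (bd P))) (y : (i : Fin (n+2)) → Fin D × Fin (b i.succ)),
        ∏ i : Fin (n+2), u p i (y i) = φ (v p 0) * ∏ i : Fin (n+2), v p i.succ (y i) := by
      intro p y
      rw [Fin.prod_univ_succ]
      conv_rhs => rw [Fin.prod_univ_succ]
      have h0 : u p 0 (y 0) = φ (v p 0) * v p (0 : Fin (n+2)).succ (y 0) := by
        simp only [u, if_pos rfl]
      have hs : ∀ i : Fin (n+1), u p i.succ (y i.succ) = v p i.succ.succ (y i.succ) := by
        intro i
        simp only [u, if_neg (Fin.succ_ne_zero i)]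
      rw [h0]
      rw [Finset.prod_congr rfl (fun i _ => hs i)]
      ring
    let σ : Finset (Fin (tensorRank (bd P))) :=
      Finset.univ.filter (fun p => φ (v p 0) ≠ 0)
    have hT'σ : ∀ y, T' y = ∑ p ∈ σ, ∏ i : Fin (n+2), u p i (y i) := by
      intro y
      rw [hT'decomp y]
      rw [Finset.sum_subset (Finset.filter_subset _ _)]
      · exact Finset.sum_congr rfl fun p _ => (hprodu p y).symm
      · intro p _ hp
        simp only [σ, Finset.mem_filter, Finset.mem_univ, true_and, not_not] at hp
        rw [hprodu p y, hp, zero_mul]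
    have hrankT' : tensorRank T' ≤ σ.card := by
      have := tensorRank_le_card T' u σ hT'σ
      exact this
    -- counting
    let K : Finset t := Finset.univ.filter (fun w' : t => ∀ j', w' ≠ w j')
    let E : Finset (Fin (tensorRank (bd P))) := K.image pick
    have hEκ : ∀ p ∈ E, φ (v p 0) = 0 := by
      intro p hp
      simp only [E, Finset.mem_image] at hp
      obtain ⟨w', hw', rfl⟩ := hp
      simp only [K, Finset.mem_filter, Finset.mem_univ, true_and] at hw'
      rw [hpick w']
      exact hkill w' hw'
    have hdisj : Disjoint σ E := by
      rw [Finset.disjoint_left]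
      intro p hpσ hpE
      simp only [σ, Finset.mem_filter, Finset.mem_univ, true_and] at hpσ
      exact hpσ (hEκ p hpE)
    have hcards : σ.card + E.card ≤ tensorRank (bd P) := by
      rw [← Finset.card_union_of_disjoint hdisj]
      calc (σ ∪ E).card ≤ (Finset.univ : Finset (Fin (tensorRank (bd P)))).card :=
            Finset.card_le_univ _
        _ = tensorRank (bd P) := by rw [Finset.card_univ, Fintype.card_fin]
    have hEcard : E.card = K.card := Finset.card_image_of_injective K hpickinj
    have hKcard : Fintype.card t ≤ K.card + D := by
      have heq := Finset.card_filter_add_card_filter_not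
        (s := (Finset.univ : Finset t)) (p := fun w' : t => ∀ j', w' ≠ w j')
      have hsub : Finset.univ.filter (fun w' : t => ¬ ∀ j', w' ≠ w j')
          ⊆ Finset.image w Finset.univ := by
        intro w' hw'
        simp only [Finset.mem_filter, Finset.mem_univ, true_and] at hw'
        push_neg at hw'
        obtain ⟨j', hj'⟩ := hw'
        exact Finset.mem_image.mpr ⟨j', Finset.mem_univ j', hj'.symm⟩
      have hneg : (Finset.univ.filter (fun w' : t => ¬ ∀ j', w' ≠ w j')).card ≤ D := by
        calc _ ≤ (Finset.image w Finset.univ).card := Finset.card_le_card hsub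
          _ ≤ (Finset.univ : Finset (Fin D)).card := Finset.card_image_le
          _ = D := by rw [Finset.card_univ, Fintype.card_fin]
      rw [Finset.card_univ] at heq
      have hKrfl : K.card
          = (Finset.univ.filter (fun w' : t => ∀ j', w' ≠ w j')).card := rfl
      omega
    -- (III) apply the induction hypothesis to the contracted blocks
    have hblocks : ∀ j, Persistent n (fun i => b i.succ)
        (contrFirst (fun a => f (j, a)) (P j)) := fun j => hSpers j _ (hfS j)
    have hIH := IH (fun i => b i.succ) (fun j => contrFirst (fun a => f (j, a)) (P j))
      hblocks (fun i => hb i.succ)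
    rw [← congrArg tensorRank hT'] at hIH
    -- final arithmetic
    have hsum : (∑ k : Fin (n+2), (b k.castSucc - 1))
        = (b 0 - 1) + ∑ k : Fin (n+1), (b k.castSucc.succ - 1) := by
      rw [Fin.sum_univ_succ]
      congr 1
    have hIH' : D * ((∑ k : Fin (n+1), (b k.castSucc.succ - 1)) + 1) ≤ tensorRank T' := hIH
    have hcardt' : Fintype.card t = D * (b 0 - 1) + D := by
      rw [hcardt]
      conv_lhs => rw [show b 0 = (b 0 - 1) + 1 from (Nat.succ_pred_eq_of_pos (hb 0)).symm]
      rw [Nat.mul_succ]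
    rw [hsum, add_assoc, Nat.mul_add]
    have hstep1 : D * ((∑ k : Fin (n+1), (b k.castSucc.succ - 1)) + 1) ≤ σ.card :=
      le_trans hIH' hrankT'
    have hstep2 : D * (b 0 - 1) ≤ E.card := by
      rw [hEcard]
      calc D * (b 0 - 1) = Fintype.card t - D := by rw [hcardt', Nat.add_sub_cancel]
        _ ≤ K.card := by omega
    calc D * (b 0 - 1) + D * ((∑ k : Fin (n+1), (b k.castSucc.succ - 1)) + 1)
        ≤ E.card + σ.card := Nat.add_le_add hstep2 hstep1
      _ = σ.card + E.card := Nat.add_comm _ _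
      _ ≤ tensorRank (bd P) := hcards

lemma kron_ghz_eq_bd {m : ℕ} {b : Fin (m+1) → ℕ} {D : ℕ}
    (P : ((i : Fin (m+1)) → Fin (b i)) → ℂ) :
    kron (fun _ => Fin D) (fun i => Fin (b i)) (GHZ D (m+1)) P = bd (fun _ => P) := by
  classical
  funext x
  simp only [kron, GHZ, bd]
  by_cases h : ∃ j : Fin D, ∀ i : Fin (m+1), (x i).1 = j
  · obtain ⟨j, hj⟩ := h
    rw [if_pos ⟨j, hj⟩, one_mul]
    rw [Finset.sum_eq_single j]
    · rw [if_pos hj, one_mul]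
    · intro j' _ hj'
      rw [if_neg, zero_mul]
      intro hc
      exact hj' ((hc 0).symm.trans (hj 0))
    · intro hc; exact absurd (Finset.mem_univ j) hc
  · rw [if_neg h, zero_mul]
    symm
    refine Finset.sum_eq_zero fun j _ => ?_
    rw [if_neg (fun hc => h ⟨j, hc⟩), zero_mul]

lemma ghz_term {m D : ℕ} (x : Fin (m+1) → Fin D) (j : Fin D) :
    (∏ i : Fin (m+1), if x i = j then (1:ℂ) else 0)
      = if (∀ i, x i = j) then (1:ℂ) else 0 := by
  classical
  rw [Finset.prod_boole]
  simp

lemma ghz_sum {m D : ℕ} (x : Fin (m+1) → Fin D) :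
    GHZ D (m+1) x = ∑ j : Fin D, if (∀ i, x i = j) then (1:ℂ) else 0 := by
  classical
  simp only [GHZ]
  by_cases h : ∃ j : Fin D, ∀ i, x i = j
  · obtain ⟨j, hj⟩ := h
    rw [if_pos ⟨j, hj⟩]
    rw [Finset.sum_eq_single j]
    · rw [if_pos hj]
    · intro j' _ hj'
      rw [if_neg (fun hc => hj' ((hc 0).symm.trans (hj 0)))]
    · intro hc; exact absurd (Finset.mem_univ j) hc
  · rw [if_neg h]
    symm
    exact Finset.sum_eq_zero fun j _ => if_neg (fun hc => h ⟨j, hc⟩)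

lemma rank_kron_ghz_le {m D : ℕ} {κ₂ : Fin (m+1) → Type} [∀ i, Fintype (κ₂ i)]
    (B : ((i : Fin (m+1)) → κ₂ i) → ℂ) :
    tensorRank (kron (fun _ => Fin D) κ₂ (GHZ D (m+1)) B) ≤ D * tensorRank B := by
  classical
  obtain ⟨w, hw⟩ := tensorRank_mem B
  let e : Fin (D * tensorRank B) ≃ Fin D × Fin (tensorRank B) :=
    finProdFinEquiv.symm
  refine tensorRank_le _ (fun q i cc =>
    (if cc.1 = (e q).1 then 1 else 0) * w (e q).2 i cc.2) (fun x => ?_)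
  have hterm : ∀ q : Fin (D * tensorRank B),
      (∏ i, (if (x i).1 = (e q).1 then (1:ℂ) else 0) * w (e q).2 i (x i).2)
        = (if (∀ i, (x i).1 = (e q).1) then (1:ℂ) else 0)
            * ∏ i, w (e q).2 i (x i).2 := by
    intro q
    rw [Finset.prod_mul_distrib, ghz_term]
  simp only [hterm]
  calc kron (fun _ => Fin D) κ₂ (GHZ D (m+1)) B x
      = (∑ j, if (∀ i, (x i).1 = j) then (1:ℂ) else 0) * B (fun i => (x i).2) := by
        rw [kron, ghz_sum]
    _ = ∑ j, (if (∀ i, (x i).1 = j) then (1:ℂ) else 0) * B (fun i => (x i).2) :=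
        Finset.sum_mul _ _ _
    _ = ∑ j, ∑ p, (if (∀ i, (x i).1 = j) then (1:ℂ) else 0) * ∏ i, w p i (x i).2 := by
        refine Finset.sum_congr rfl fun j _ => ?_
        rw [hw, Finset.mul_sum]
    _ = ∑ z : Fin D × Fin (tensorRank B),
          (if (∀ i, (x i).1 = z.1) then (1:ℂ) else 0) * ∏ i, w z.2 i (x i).2 := by
        rw [Fintype.sum_prod_type]
    _ = ∑ q : Fin (D * tensorRank B),
          (if (∀ i, (x i).1 = (e q).1) then (1:ℂ) else 0) * ∏ i, w (e q).2 i (x i).2 :=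
        (Fintype.sum_equiv e _ _ (fun q => rfl)).symm

instance sumElimInlDecEq {ι : Type} {ι' : Type} (κ : ι' → Type) (D : ℕ) (i : ι)
    (a : Sum.elim (fun _ : ι => Fin D) κ (Sum.inl i)) (b : Fin D) : Decidable (a = b) :=
  instDecidableEqFin D a b

lemma rank_tprod_ghz_le {m D : ℕ} {κ₂ : Fin (m+1) → Type} [∀ i, Fintype (κ₂ i)]
    (B : ((i : Fin (m+1)) → κ₂ i) → ℂ) :
    tensorRank (tprodT (fun _ : Fin (m+1) => Fin D) κ₂ (GHZ D (m+1)) B)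
      ≤ D * tensorRank B := by
  obtain ⟨w, hw⟩ := tensorRank_mem B
  let e : Fin (D * tensorRank B) ≃ Fin D × Fin (tensorRank B) :=
    finProdFinEquiv.symm
  refine tensorRank_le _ (fun q ii => Sum.rec
      (motive := fun ii => Sum.elim (fun _ : Fin (m+1) => Fin D) κ₂ ii → ℂ)
      (fun _ => fun a : Fin D => if a = (e q).1 then 1 else 0)
      (fun i => w (e q).2 i) ii) (fun x => ?_)
  letI hdec : ∀ i : Fin (m+1),
      DecidableEq (Sum.elim (fun _ : Fin (m+1) => Fin D) κ₂ (Sum.inl i)) :=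
    fun _ => instDecidableEqFin D
  have hterm : ∀ q : Fin (D * tensorRank B),
      (∏ ii : Fin (m+1) ⊕ Fin (m+1), Sum.rec
        (motive := fun ii => Sum.elim (fun _ : Fin (m+1) => Fin D) κ₂ ii → ℂ)
        (fun _ => fun a : Fin D => if a = (e q).1 then 1 else 0)
        (fun i => w (e q).2 i) ii (x ii))
        = (if (∀ i, x (Sum.inl i) = (e q).1) then (1:ℂ) else 0)
            * ∏ i, w (e q).2 i (x (Sum.inr i)) := by
    intro q
    rw [Fintype.prod_sum_type]
    congr 1
    · show (∏ i : Fin (m+1), if x (Sum.inl i) = (e q).1 then (1:ℂ) else 0) = _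
      exact ghz_term (fun i => x (Sum.inl i)) ((e q).1)
  simp only [hterm]
  calc tprodT (fun _ : Fin (m+1) => Fin D) κ₂ (GHZ D (m+1)) B x
      = (∑ j, if (∀ i, x (Sum.inl i) = j) then (1:ℂ) else 0)
          * B (fun i => x (Sum.inr i)) := by
        exact congrArg (fun t => t * B (fun i => x (Sum.inr i))) (ghz_sum (fun i => x (Sum.inl i)))
    _ = ∑ j, (if (∀ i, x (Sum.inl i) = j) then (1:ℂ) else 0)
          * B (fun i => x (Sum.inr i)) := Finset.sum_mul _ _ _
    _ = ∑ j, ∑ p, (if (∀ i, x (Sum.inl i) = j) then (1:ℂ) else 0)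
          * ∏ i, w p i (x (Sum.inr i)) := by
        refine Finset.sum_congr rfl fun j _ => ?_
        exact (congrArg _ (hw _)).trans (Finset.mul_sum _ _ _)
    _ = ∑ z : Fin D × Fin (tensorRank B),
          (if (∀ i, x (Sum.inl i) = z.1) then (1:ℂ) else 0)
            * ∏ i, w z.2 i (x (Sum.inr i)) := by
        rw [Fintype.sum_prod_type]
    _ = ∑ q : Fin (D * tensorRank B),
          (if (∀ i, x (Sum.inl i) = (e q).1) then (1:ℂ) else 0)
            * ∏ i, w (e q).2 i (x (Sum.inr i)) :=
        (Fintype.sum_equiv e _ _ (fun q => rfl)).symm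

lemma rank_kron_le_tprod {ι : Type} [Fintype ι] [Nonempty ι] {κ₁ κ₂ : ι → Type}
    [∀ i, Fintype (κ₁ i)] [∀ i, Fintype (κ₂ i)]
    (A : ((i : ι) → κ₁ i) → ℂ) (B : ((i : ι) → κ₂ i) → ℂ) :
    tensorRank (kron κ₁ κ₂ A B) ≤ tensorRank (tprodT κ₁ κ₂ A B) := by
  classical
  haveI : ∀ ii : ι ⊕ ι, Fintype (Sum.elim κ₁ κ₂ ii) := fun ii =>
    Sum.rec (motive := fun ii => Fintype (Sum.elim κ₁ κ₂ ii))
      (fun i => inferInstanceAs (Fintype (κ₁ i)))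
      (fun i => inferInstanceAs (Fintype (κ₂ i))) ii
  obtain ⟨w, hw⟩ := tensorRank_mem (tprodT κ₁ κ₂ A B)
  refine tensorRank_le _ (fun p i cc => w p (Sum.inl i) cc.1 * w p (Sum.inr i) cc.2)
    (fun x => ?_)
  have hmerge : ∀ p, (∏ i, w p (Sum.inl i) (x i).1 * w p (Sum.inr i) (x i).2)
      = ∏ ii : ι ⊕ ι, w p ii (Sum.rec (motive := fun ii => Sum.elim κ₁ κ₂ ii)
          (fun i => (x i).1) (fun i => (x i).2) ii) := by
    intro p
    rw [Fintype.prod_sum_type]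
    rw [Finset.prod_mul_distrib]
  simp only [hmerge]
  have := hw (fun ii => Sum.rec (motive := fun ii => Sum.elim κ₁ κ₂ ii)
      (fun i => (x i).1) (fun i => (x i).2) ii)
  rw [← this]
  rfl

lemma rank_zero_of_empty {n : ℕ} {b : Fin n → ℕ}
    (P : ((i : Fin n) → Fin (b i)) → ℂ) (i0 : Fin n) (h : b i0 = 0) :
    tensorRank P = 0 := by
  refine Nat.le_antisymm ?_ (Nat.zero_le _)
  refine tensorRank_le P (fun p => p.elim0) (fun x => ?_)
  have : Fin 0 := h ▸ x i0
  exact this.elim0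

end AuxRank

theorem rank_GHZ_mul_persistent (n D : ℕ) (b : Fin (n + 2) → ℕ)
    (P : ((i : Fin (n + 2)) → Fin (b i)) → ℂ)
    (hP : Persistent n b P)
    (hmin : tensorRank P = (∑ k : Fin (n + 1), (b k.castSucc - 1)) + 1) :
    tensorRank (kron (fun _ => Fin D) (fun i => Fin (b i)) (GHZ D (n + 2)) P)
      = D * tensorRank P ∧
    tensorRank (tprodT (fun _ : Fin (n + 2) => Fin D) (fun i => Fin (b i)) (GHZ D (n + 2)) P)
      = D * tensorRank P := by
  have hb : ∀ i, 1 ≤ b i := by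
    intro i
    by_contra h
    push_neg at h
    have hz : b i = 0 := by omega
    have h0 := rank_zero_of_empty P i hz
    rw [h0] at hmin
    exact absurd hmin.symm (Nat.succ_ne_zero _)
  have hlow : D * tensorRank P
      ≤ tensorRank (kron (fun _ => Fin D) (fun i => Fin (b i)) (GHZ D (n+2)) P) := by
    rw [hmin, kron_ghz_eq_bd (m := n+1) (D := D) P]
    exact bd_rank_lower D n b (fun _ => P) (fun _ => hP) hb
  have hupk := rank_kron_ghz_le (m := n+1) (D := D) P
  have h1 : tensorRank (kron (fun _ => Fin D) (fun i => Fin (b i)) (GHZ D (n+2)) P)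
      = D * tensorRank P := le_antisymm hupk hlow
  have hkt := rank_kron_le_tprod (GHZ D (n+2)) P
  have hupt := rank_tprod_ghz_le (m := n+1) (D := D) P
  exact ⟨h1, le_antisymm hupt (le_trans (le_of_eq h1.symm) hkt)⟩
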